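/- The orbit space X(ℝ)/ℤ₂⁴ of the canonical ℤ₂⁴-action on the real Grassmann manifold G₄,₂(ℝ) (realized as the real Plücker quadric X(ℝ)) is homeomorphic to the 4-dimensional sphere S⁴, i.e. to the unit sphere {x ∈ ℝ⁵ : ‖x‖ = 1}. -/

import Mathlib

/-!
The coordinates of `ℝ⁶` pair up as `(w₀, w₅)`, `(w₁, w₄)`, `(w₂, w₃)`, and `ℤ₂⁴` changes the signs
of the two entries of each pair so that the three products of signs agree. Hence the differences
`x² - y²` within the pairs and the square of `u + i v`, where `u = w₀w₅` and `v = -(w₁w₄ + w₂w₃)`,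
are invariants. On the quadric they determine the orbit, because the pair products `xy` are linear
in `(u, v)` there and a pair `(x, y)` is determined up to sign by `(x + i y)²`; and taking complex
square roots shows that every vector of `ℝ⁵` is attained. Along each ray of `ℝ⁵` the squared norm of
the representative, read off from the invariants, increases strictly from `0` to `∞`, so the orbits
of unit vectors correspond to the rays, i.e. to `S⁴`. The orbit space is compact, so the resulting
continuous bijection onto the sphere is a homeomorphism.
-/

/-- Proportionality of nonzero vectors of `ℝ⁶`: the relation defining `ℝP⁵`. -/
def projRelR (x y : {w : Fin 6 → ℝ // w ≠ 0}) : Prop :=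
  ∃ c : ℝ, c ≠ 0 ∧ (fun k => c * x.1 k) = y.1

/-- `ℝP⁵`, with the quotient topology. -/
abbrev RP5 := Quot projRelR

/-- The real Plücker quadric `X(ℝ) = {[w] ∈ ℝP⁵ : w₀w₅ + w₂w₃ = w₁w₄}`, i.e. the real
Grassmannian `G₄,₂(ℝ)` under the Plücker embedding, with the subspace topology. -/
def realPluckerQuadric : Set RP5 :=
  {p | ∃ w : {w : Fin 6 → ℝ // w ≠ 0}, Quot.mk projRelR w = p ∧
        w.1 0 * w.1 5 + w.1 2 * w.1 3 = w.1 1 * w.1 4}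

/-- The weights of the `ℤ₂⁴`-action on `ℝP⁵` coming from the second symmetric power:
`ε·[w] = [ε₁ε₂w₀ : ε₁ε₃w₁ : ε₁ε₄w₂ : ε₂ε₃w₃ : ε₂ε₄w₄ : ε₃ε₄w₅]`. -/
def signCoef (ε : Fin 4 → ℝ) : Fin 6 → ℝ :=
  ![ε 0 * ε 1, ε 0 * ε 2, ε 0 * ε 3, ε 1 * ε 2, ε 1 * ε 3, ε 2 * ε 3]

/-- Two points of `X(ℝ)` lie in the same orbit of the group `ℤ₂⁴ = {−1,1}⁴`. -/
def realOrbitRel (p q : ↥realPluckerQuadric) : Prop :=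
  ∃ ε : Fin 4 → ℝ, (∀ i, ε i = 1 ∨ ε i = -1) ∧
    ∃ w w' : {w : Fin 6 → ℝ // w ≠ 0},
      Quot.mk projRelR w = p.1 ∧ Quot.mk projRelR w' = q.1 ∧
      ∀ k : Fin 6, w'.1 k = signCoef ε k * w.1 k

open Real

noncomputable section

lemma exists_sq_sub_sq_eq (a b : ℝ) : ∃ x y : ℝ, x ^ 2 - y ^ 2 = a ∧ 2 * (x * y) = b := by
  obtain ⟨z, hz⟩ := IsAlgClosed.exists_pow_nat_eq (⟨a, b⟩ : ℂ) two_pos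
  refine ⟨z.re, z.im, ?_, ?_⟩
  · simpa [sq] using congrArg Complex.re hz
  · have := congrArg Complex.im hz
    simp only [sq, Complex.mul_im] at this
    linarith

lemma exists_sign_of_sq_sub_sq_eq {x y x' y' : ℝ} (h₁ : x' ^ 2 - y' ^ 2 = x ^ 2 - y ^ 2)
    (h₂ : x' * y' = x * y) : ∃ d : ℝ, (d = 1 ∨ d = -1) ∧ x' = d * x ∧ y' = d * y := by
  have hsq : (⟨x', y'⟩ : ℂ) ^ 2 = (⟨x, y⟩ : ℂ) ^ 2 := by
    apply Complex.ext <;> simp [sq] <;> linarith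
  rcases sq_eq_sq_iff_eq_or_eq_neg.mp hsq with h | h
  · exact ⟨1, Or.inl rfl, by simpa using congrArg Complex.re h,
      by simpa using congrArg Complex.im h⟩
  · exact ⟨-1, Or.inr rfl, by simpa using congrArg Complex.re h,
      by simpa using congrArg Complex.im h⟩

lemma sqrt_sq_sub_sq_add_sq (x y : ℝ) :
    √((x ^ 2 - y ^ 2) ^ 2 + (2 * (x * y)) ^ 2) = x ^ 2 + y ^ 2 := by
  rw [show (x ^ 2 - y ^ 2) ^ 2 + (2 * (x * y)) ^ 2 = (x ^ 2 + y ^ 2) ^ 2 by ring]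
  exact sqrt_sq (by positivity)

def radialProfile {ι : Type*} [Fintype ι] (A P : ι → ℝ) (t : ℝ) : ℝ :=
  ∑ j, √(t ^ 2 * A j + t * P j)

section radialProfile

variable {ι : Type*} [Fintype ι] {A P : ι → ℝ}

lemma radialProfile_zero : radialProfile A P 0 = 0 := by simp [radialProfile]

lemma continuous_radialProfile : Continuous (radialProfile A P) := by
  unfold radialProfile; fun_prop

lemma strictMonoOn_radialProfile (hA : ∀ j, 0 ≤ A j) (hP : ∀ j, 0 ≤ P j)
    (h : ∃ j, 0 < A j + P j) : StrictMonoOn (radialProfile A P) (Set.Ici 0) := by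
  intro s (hs : 0 ≤ s) t _ hst
  have hts : 0 ≤ t - s := sub_nonneg.2 hst.le
  have hle : ∀ j, s ^ 2 * A j + s * P j ≤ t ^ 2 * A j + t * P j := fun j => by
    nlinarith [mul_nonneg (mul_nonneg hts (by linarith : 0 ≤ t + s)) (hA j),
      mul_nonneg hts (hP j)]
  obtain ⟨j, hj⟩ := h
  refine Finset.sum_lt_sum (fun i _ => sqrt_le_sqrt (hle i)) ⟨j, Finset.mem_univ _, ?_⟩
  refine sqrt_lt_sqrt (by nlinarith [hA j, hP j]) ?_
  rcases (hA j).eq_or_lt with hA0 | hApos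
  · rw [← hA0] at hj ⊢
    nlinarith [mul_pos (sub_pos.2 hst) hj]
  · nlinarith [mul_pos (mul_pos (sub_pos.2 hst) (by linarith : 0 < t + s)) hApos,
      mul_nonneg hts (hP j)]

lemma exists_one_le_radialProfile (hA : ∀ j, 0 ≤ A j) (h : ∃ j, 0 < A j + P j) :
    ∃ t, 0 ≤ t ∧ 1 ≤ radialProfile A P t := by
  obtain ⟨j, hj⟩ := h
  set t := 1 + (A j + P j)⁻¹
  have ht : 1 ≤ t := le_add_of_nonneg_right (inv_nonneg.2 hj.le)
  have htj : t * (A j + P j) = A j + P j + 1 := by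
    rw [add_mul, one_mul, inv_mul_cancel₀ hj.ne']
  refine ⟨t, by linarith, le_trans ?_ (Finset.single_le_sum (f := fun j => √(t ^ 2 * A j + t * P j))
    (fun i _ => sqrt_nonneg _) (Finset.mem_univ j))⟩
  rw [one_le_sqrt]
  nlinarith [mul_nonneg (mul_nonneg (by linarith : 0 ≤ t - 1) (by linarith : 0 ≤ t)) (hA j)]

end radialProfile

def sumSq (w : Fin 6 → ℝ) : ℝ := ∑ k, w k ^ 2

def IsPlucker (w : Fin 6 → ℝ) : Prop := w 0 * w 5 + w 2 * w 3 = w 1 * w 4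

lemma continuous_sumSq : Continuous sumSq := by
  unfold sumSq; fun_prop

lemma sumSq_pos {w : Fin 6 → ℝ} (hw : w ≠ 0) : 0 < sumSq w := by
  obtain ⟨k, hk⟩ := Function.ne_iff.1 hw
  exact Finset.sum_pos' (fun k _ => sq_nonneg (w k)) ⟨k, Finset.mem_univ k, sq_pos_of_ne_zero hk⟩

lemma ne_zero_of_sumSq_eq_one {w : Fin 6 → ℝ} (hw : sumSq w = 1) : w ≠ 0 := by
  rintro rfl
  simp [sumSq] at hw

lemma sumSq_smul (c : ℝ) (w : Fin 6 → ℝ) : sumSq (c • w) = c ^ 2 * sumSq w := by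
  simp [sumSq, Finset.mul_sum, mul_pow]

lemma IsPlucker.smul {w : Fin 6 → ℝ} (hw : IsPlucker w) (c : ℝ) : IsPlucker (c • w) := by
  unfold IsPlucker at *
  simp only [Pi.smul_apply, smul_eq_mul]
  linear_combination c ^ 2 * hw

def orbitInvariant (w : Fin 6 → ℝ) : Fin 5 → ℝ :=
  let u := w 0 * w 5
  let v := -(w 1 * w 4 + w 2 * w 3)
  ![w 0 ^ 2 - w 5 ^ 2, w 1 ^ 2 - w 4 ^ 2, w 2 ^ 2 - w 3 ^ 2, u ^ 2 - v ^ 2, 2 * (u * v)]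

lemma continuous_orbitInvariant : Continuous orbitInvariant := by
  refine continuous_pi fun i => ?_
  fin_cases i <;> simp [orbitInvariant] <;> fun_prop

def weightedSmul (t : ℝ) (β : Fin 5 → ℝ) : Fin 5 → ℝ :=
  ![t * β 0, t * β 1, t * β 2, t ^ 2 * β 3, t ^ 2 * β 4]

lemma weightedSmul_weightedSmul (s t : ℝ) (β : Fin 5 → ℝ) :
    weightedSmul s (weightedSmul t β) = weightedSmul (s * t) β := by
  ext i; fin_cases i <;> simp [weightedSmul] <;> ring

lemma weightedSmul_one (β : Fin 5 → ℝ) : weightedSmul 1 β = β := by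
  ext i; fin_cases i <;> simp [weightedSmul]

lemma orbitInvariant_smul (c : ℝ) (w : Fin 6 → ℝ) :
    orbitInvariant (c • w) = weightedSmul (c ^ 2) (orbitInvariant w) := by
  ext i; fin_cases i <;> simp [orbitInvariant, weightedSmul] <;> ring

lemma continuous_weightedSmul : Continuous fun p : ℝ × (Fin 5 → ℝ) => weightedSmul p.1 p.2 := by
  refine continuous_pi fun i => ?_
  fin_cases i <;> simp [weightedSmul] <;> fun_prop

lemma sumSq_signCoef {ε : Fin 4 → ℝ} (hε : ∀ i, ε i = 1 ∨ ε i = -1) (w : Fin 6 → ℝ) :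
    sumSq (signCoef ε * w) = sumSq w := by
  have hsq : ∀ i, ε i ^ 2 = 1 := fun i => sq_eq_one_iff.2 (hε i)
  simp [sumSq, signCoef, Fin.sum_univ_six, mul_pow, hsq]

lemma orbitInvariant_signCoef {ε : Fin 4 → ℝ} (hε : ∀ i, ε i = 1 ∨ ε i = -1) (w : Fin 6 → ℝ) :
    orbitInvariant (signCoef ε * w) = orbitInvariant w := by
  have hsq : ∀ i, ε i ^ 2 = 1 := fun i => sq_eq_one_iff.2 (hε i)
  ext i
  fin_cases i <;> simp [orbitInvariant, signCoef, mul_pow, hsq] <;> ring_nf <;> simp [hsq]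

lemma smul_signCoef_eq {d₁ d₂ d₃ η : ℝ} (h₁ : d₁ = 1 ∨ d₁ = -1) (h₂ : d₂ = 1 ∨ d₂ = -1)
    (h₃ : d₃ = 1 ∨ d₃ = -1) (hη : η = 1 ∨ η = -1) :
    (η * d₁ * d₂ * d₃) • signCoef ![η * d₁ * d₂ * d₃, d₁, d₂, d₃] =
      ![d₁, d₂, d₃, η * d₃, η * d₂, η * d₁] := by
  ext k
  rcases h₁ with rfl | rfl <;> rcases h₂ with rfl | rfl <;> rcases h₃ with rfl | rfl <;>
    rcases hη with rfl | rfl <;> fin_cases k <;> simp [signCoef]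

lemma exists_signCoef_of_orbitInvariant_eq {w w' : Fin 6 → ℝ} (hw : IsPlucker w)
    (hw' : IsPlucker w') (h : orbitInvariant w' = orbitInvariant w) :
    ∃ ε : Fin 4 → ℝ, (∀ i, ε i = 1 ∨ ε i = -1) ∧ ∃ c : ℝ, c ≠ 0 ∧ w' = c • (signCoef ε * w) := by
  unfold IsPlucker at hw hw'
  have h₀ := congrFun h 0; have h₁ := congrFun h 1; have h₂ := congrFun h 2
  have h₃ := congrFun h 3; have h₄ := congrFun h 4
  simp only [orbitInvariant, Fin.isValue, neg_add_rev, Matrix.cons_val_zero, Matrix.cons_val_one,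
    Matrix.cons_val, mul_eq_mul_left_iff, OfNat.ofNat_ne_zero, or_false] at h₀ h₁ h₂ h₃ h₄
  obtain ⟨η, hη, hu, hv⟩ := exists_sign_of_sq_sub_sq_eq (x := w 0 * w 5)
    (y := -(w 1 * w 4 + w 2 * w 3)) (x' := w' 0 * w' 5) (y' := -(w' 1 * w' 4 + w' 2 * w' 3))
    (by linear_combination h₃) (by linear_combination h₄)
  have hη2 : η ^ 2 = 1 := sq_eq_one_iff.2 hη
  -- On the quadric `w₁w₄ = (u - v) / 2` and `w₂w₃ = -(u + v) / 2`, so all three pair products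
  -- of `w'` are `η` times those of `w`.
  obtain ⟨d₁, hd₁, e₀, e₅⟩ := exists_sign_of_sq_sub_sq_eq (x := w 0) (y := η * w 5)
    (x' := w' 0) (y' := w' 5)
    (by linear_combination h₀ + w 5 ^ 2 * hη2) (by linear_combination hu)
  obtain ⟨d₂, hd₂, e₁, e₄⟩ := exists_sign_of_sq_sub_sq_eq (x := w 1) (y := η * w 4)
    (x' := w' 1) (y' := w' 4)
    (by linear_combination h₁ + w 4 ^ 2 * hη2)
    (by linear_combination (hu - hv - hw' + η * hw) / 2)
  obtain ⟨d₃, hd₃, e₂, e₃⟩ := exists_sign_of_sq_sub_sq_eq (x := w 2) (y := η * w 3)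
    (x' := w' 2) (y' := w' 3)
    (by linear_combination h₂ + w 3 ^ 2 * hη2)
    (by linear_combination (-hu - hv + hw' - η * hw) / 2)
  set s := η * d₁ * d₂ * d₃
  have hs : s ^ 2 = 1 := by
    simp only [s, mul_pow, hη2, sq_eq_one_iff.2 hd₁, sq_eq_one_iff.2 hd₂, sq_eq_one_iff.2 hd₃,
      one_mul]
  refine ⟨![s, d₁, d₂, d₃], ?_, s, fun h0 => by simp [h0] at hs, ?_⟩
  · intro i
    fin_cases i
    exacts [sq_eq_one_iff.1 hs, hd₁, hd₂, hd₃]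
  · rw [← smul_mul_assoc, smul_signCoef_eq hd₁ hd₂ hd₃ hη]
    ext k
    fin_cases k <;> simp [e₀, e₁, e₂, e₃, e₄, e₅] <;> ring

/-- For `β = orbitInvariant w` with `IsPlucker w`, the entries of `pairDiffSq β` and
`pairProdSq β` are `(x² - y²)²` and `(2xy)²` for the pairs `(x, y) = (w₀, w₅), (w₁, w₄), (w₂, w₃)`,
so that `invariantRadius β = sumSq w` (`invariantRadius_orbitInvariant`). -/
def pairDiffSq (β : Fin 5 → ℝ) : Fin 3 → ℝ := ![β 0 ^ 2, β 1 ^ 2, β 2 ^ 2]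

def pairProdSq (β : Fin 5 → ℝ) : Fin 3 → ℝ :=
  let N := √(β 3 ^ 2 + β 4 ^ 2)
  ![2 * (N + β 3), N - β 4, N + β 4]

def invariantRadius (β : Fin 5 → ℝ) : ℝ := radialProfile (pairDiffSq β) (pairProdSq β) 1

lemma pairDiffSq_nonneg (β : Fin 5 → ℝ) (j : Fin 3) : 0 ≤ pairDiffSq β j := by
  fin_cases j <;> simp [pairDiffSq] <;> positivity

lemma pairProdSq_nonneg (β : Fin 5 → ℝ) (j : Fin 3) : 0 ≤ pairProdSq β j := by
  have h₃ := abs_le.1 (abs_le_sqrt (x := β 3) (le_add_of_nonneg_right (sq_nonneg (β 4))))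
  have h₄ := abs_le.1 (abs_le_sqrt (x := β 4) (le_add_of_nonneg_left (sq_nonneg (β 3))))
  fin_cases j <;> simp [pairProdSq] <;> linarith

lemma exists_pos_pairDiffSq_add_pairProdSq {β : Fin 5 → ℝ} (hβ : β ≠ 0) :
    ∃ j, 0 < pairDiffSq β j + pairProdSq β j := by
  by_contra! h
  have hzero : ∀ j, pairDiffSq β j = 0 ∧ pairProdSq β j = 0 := fun j => by
    have := h j; have := pairDiffSq_nonneg β j; have := pairProdSq_nonneg β j
    constructor <;> linarith
  have h0 := hzero 0; have h1 := hzero 1; have h2 := hzero 2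
  simp only [pairDiffSq, pairProdSq, Matrix.cons_val_zero, Matrix.cons_val_one, Matrix.cons_val,
    pow_eq_zero_iff, ne_eq, OfNat.ofNat_ne_zero, not_false_eq_true, mul_eq_zero, false_or] at h0 h1 h2
  have hN : √(β 3 ^ 2 + β 4 ^ 2) = 0 := by linarith
  rw [sqrt_eq_zero (by positivity)] at hN
  apply hβ
  ext i
  fin_cases i <;> simp [h0.1, h1.1, h2.1] <;> nlinarith [sq_nonneg (β 3), sq_nonneg (β 4)]

lemma invariantRadius_smul (β : Fin 5 → ℝ) {t : ℝ} (ht : 0 ≤ t) :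
    invariantRadius (t • β) = radialProfile (pairDiffSq β) (pairProdSq β) t := by
  have hN : √((t * β 3) ^ 2 + (t * β 4) ^ 2) = t * √(β 3 ^ 2 + β 4 ^ 2) := by
    rw [show (t * β 3) ^ 2 + (t * β 4) ^ 2 = t ^ 2 * (β 3 ^ 2 + β 4 ^ 2) by ring,
      sqrt_mul (sq_nonneg t), sqrt_sq ht]
  simp only [invariantRadius, radialProfile, Fin.sum_univ_three, pairDiffSq, pairProdSq,
    Pi.smul_apply, smul_eq_mul, hN, Matrix.cons_val_zero, Matrix.cons_val_one, Matrix.cons_val,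
    one_pow, one_mul]
  ring_nf

lemma invariantRadius_zero : invariantRadius 0 = 0 := by
  simpa [radialProfile_zero] using invariantRadius_smul 0 le_rfl

lemma invariantRadius_orbitInvariant {w : Fin 6 → ℝ} (hw : IsPlucker w) :
    invariantRadius (orbitInvariant w) = sumSq w := by
  have hN : √(orbitInvariant w 3 ^ 2 + orbitInvariant w 4 ^ 2) =
      (w 0 * w 5) ^ 2 + (w 1 * w 4 + w 2 * w 3) ^ 2 := by
    simp only [orbitInvariant, Matrix.cons_val, sqrt_sq_sub_sq_add_sq]
    ring
  set x : Fin 3 → ℝ := ![w 0, w 1, w 2]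
  set y : Fin 3 → ℝ := ![w 5, w 4, w 3]
  have e : ∀ j, pairDiffSq (orbitInvariant w) j + pairProdSq (orbitInvariant w) j =
      (x j ^ 2 - y j ^ 2) ^ 2 + (2 * (x j * y j)) ^ 2 := by
    unfold IsPlucker at hw
    intro j
    fin_cases j <;> simp only [pairDiffSq, pairProdSq, hN] <;> simp [orbitInvariant, x, y]
    · ring
    · linear_combination (w 0 * w 5 + 3 * (w 1 * w 4) + w 2 * w 3) * hw
    · linear_combination (w 0 * w 5 - w 1 * w 4 - 3 * (w 2 * w 3)) * hw
  simp only [invariantRadius, radialProfile, one_pow, one_mul, e, sqrt_sq_sub_sq_add_sq]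
  simp only [sumSq, Fin.sum_univ_six, Fin.sum_univ_three, x, y, Matrix.cons_val_zero,
    Matrix.cons_val_one, Matrix.cons_val]
  ring

lemma orbitInvariant_ne_zero {w : Fin 6 → ℝ} (hw : IsPlucker w) (hw₀ : w ≠ 0) :
    orbitInvariant w ≠ 0 := by
  intro h
  have := invariantRadius_orbitInvariant hw
  rw [h, invariantRadius_zero] at this
  exact (sumSq_pos hw₀).ne this

lemma exists_isPlucker_orbitInvariant_eq (β : Fin 5 → ℝ) :
    ∃ w, IsPlucker w ∧ orbitInvariant w = β := by
  obtain ⟨u, v, huv₁, huv₂⟩ := exists_sq_sub_sq_eq (β 3) (β 4)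
  obtain ⟨x₁, y₁, h₁, h₁'⟩ := exists_sq_sub_sq_eq (β 0) (2 * u)
  obtain ⟨x₂, y₂, h₂, h₂'⟩ := exists_sq_sub_sq_eq (β 1) (u - v)
  obtain ⟨x₃, y₃, h₃, h₃'⟩ := exists_sq_sub_sq_eq (β 2) (-(u + v))
  have hu : x₁ * y₁ = u := by linarith
  have hv : -(x₂ * y₂ + x₃ * y₃) = v := by linarith
  refine ⟨![x₁, x₂, x₃, y₃, y₂, y₁], ?_, ?_⟩
  · change x₁ * y₁ + x₃ * y₃ = x₂ * y₂
    linarith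
  · ext i
    fin_cases i <;> simp [orbitInvariant, h₁, h₂, h₃, hu, hv, huv₁, huv₂]

lemma eq_one_of_invariantRadius_smul_eq {β : Fin 5 → ℝ} (hβ : β ≠ 0) {t : ℝ} (ht : 0 ≤ t)
    (h : invariantRadius (t • β) = invariantRadius β) : t = 1 := by
  refine (strictMonoOn_radialProfile (pairDiffSq_nonneg β) (pairProdSq_nonneg β)
    (exists_pos_pairDiffSq_add_pairProdSq hβ)).injOn ht (Set.mem_Ici.2 zero_le_one) ?_
  rwa [← invariantRadius_smul β ht, ← invariantRadius_smul β zero_le_one, one_smul]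

lemma exists_invariantRadius_smul_eq_one {β : Fin 5 → ℝ} (hβ : β ≠ 0) :
    ∃ t : ℝ, 0 < t ∧ invariantRadius (t • β) = 1 := by
  obtain ⟨T, hT, hT1⟩ := exists_one_le_radialProfile (pairDiffSq_nonneg β)
    (exists_pos_pairDiffSq_add_pairProdSq hβ)
  obtain ⟨t, ⟨ht, -⟩, hteq⟩ := intermediate_value_Icc hT continuous_radialProfile.continuousOn
    (show (1 : ℝ) ∈ Set.Icc _ _ from ⟨radialProfile_zero.trans_le zero_le_one, hT1⟩)
  refine ⟨t, ht.lt_of_ne ?_, by rwa [invariantRadius_smul β ht]⟩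
  rintro rfl
  simp [radialProfile_zero] at hteq

/-- Defined on all of `ℝP⁵` rather than on the quadric, so that its continuity comes straight from
the quotient topology; on unit representatives it is `orbitInvariant` (`projInvariant_mk`). -/
def projInvariant : RP5 → EuclideanSpace ℝ (Fin 5) :=
  Quot.lift (fun w => WithLp.toLp 2 (weightedSmul (sumSq w.1)⁻¹ (orbitInvariant w.1))) <| by
    rintro w ⟨_, _⟩ ⟨c, hc, rfl⟩
    change _ = WithLp.toLp 2 (weightedSmul (sumSq (c • w.1))⁻¹ (orbitInvariant (c • w.1)))
    rw [sumSq_smul, orbitInvariant_smul, weightedSmul_weightedSmul]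
    congr 2
    field_simp

lemma continuous_projInvariant : Continuous projInvariant := by
  have h : Continuous fun w : {w : Fin 6 → ℝ // w ≠ 0} =>
      weightedSmul (sumSq w.1)⁻¹ (orbitInvariant w.1) :=
    continuous_weightedSmul.comp <|
      ((continuous_sumSq.comp continuous_subtype_val).inv₀ fun w => (sumSq_pos w.2).ne').prodMk
        (continuous_orbitInvariant.comp continuous_subtype_val)
  exact continuous_quot_lift _ ((PiLp.continuous_toLp 2 _).comp h)

lemma projInvariant_mk {w : {w : Fin 6 → ℝ // w ≠ 0}} (hw : sumSq w.1 = 1) :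
    projInvariant (Quot.mk _ w) = WithLp.toLp 2 (orbitInvariant w.1) := by
  change WithLp.toLp 2 (weightedSmul (sumSq w.1)⁻¹ _) = _
  rw [hw, inv_one, weightedSmul_one]

lemma exists_unit_rep (p : realPluckerQuadric) : ∃ w : {w : Fin 6 → ℝ // w ≠ 0},
    sumSq w.1 = 1 ∧ IsPlucker w.1 ∧ Quot.mk projRelR w = p.1 := by
  obtain ⟨w, hwp, hw⟩ := p.2
  have hpos := sumSq_pos w.2
  set c := (√(sumSq w.1))⁻¹
  have hc : c ≠ 0 := inv_ne_zero (sqrt_pos.2 hpos).ne'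
  have h1 : sumSq (c • w.1) = 1 := by
    rw [sumSq_smul, inv_pow, sq_sqrt hpos.le, inv_mul_cancel₀ hpos.ne']
  exact ⟨⟨c • w.1, ne_zero_of_sumSq_eq_one h1⟩, h1, IsPlucker.smul hw c,
    (Quot.sound ⟨c, hc, rfl⟩).symm.trans hwp⟩

lemma projInvariant_ne_zero (p : realPluckerQuadric) : projInvariant p.1 ≠ 0 := by
  obtain ⟨w, hw1, hw, hwp⟩ := exists_unit_rep p
  rw [← hwp, projInvariant_mk hw1]
  simpa using orbitInvariant_ne_zero hw w.2

lemma projInvariant_eq_of_realOrbitRel {p q : realPluckerQuadric} (h : realOrbitRel p q) :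
    projInvariant p.1 = projInvariant q.1 := by
  obtain ⟨ε, hε, w, w', hwp, hwq, hk⟩ := h
  have hw' : w'.1 = signCoef ε * w.1 := funext hk
  rw [← hwp, ← hwq]
  change WithLp.toLp 2 (weightedSmul (sumSq w.1)⁻¹ (orbitInvariant w.1)) =
    WithLp.toLp 2 (weightedSmul (sumSq w'.1)⁻¹ (orbitInvariant w'.1))
  rw [hw', sumSq_signCoef hε, orbitInvariant_signCoef hε]

lemma realOrbitRel_of_orbitInvariant_eq {p q : realPluckerQuadric}
    {w w' : {w : Fin 6 → ℝ // w ≠ 0}} (hwp : Quot.mk projRelR w = p.1)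
    (hwq : Quot.mk projRelR w' = q.1) (hw : IsPlucker w.1) (hw' : IsPlucker w'.1)
    (h : orbitInvariant w'.1 = orbitInvariant w.1) : realOrbitRel p q := by
  obtain ⟨ε, hε, c, hc, hcw⟩ := exists_signCoef_of_orbitInvariant_eq hw hw' h
  have hne : signCoef ε * w.1 ≠ 0 := fun h0 => w'.2 (by rw [hcw, h0, smul_zero])
  refine ⟨ε, hε, w, ⟨_, hne⟩, hwp, ?_, fun k => rfl⟩
  rw [← hwq]
  exact Quot.sound ⟨c, hc, hcw.symm⟩

def sphereMap (p : realPluckerQuadric) : Metric.sphere (0 : EuclideanSpace ℝ (Fin 5)) 1 :=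
  ⟨‖projInvariant p.1‖⁻¹ • projInvariant p.1, by
    rw [mem_sphere_zero_iff_norm, norm_smul, norm_inv, norm_norm,
      inv_mul_cancel₀ (norm_ne_zero_iff.2 (projInvariant_ne_zero p))]⟩

def orbitSphereMap : Quot realOrbitRel → Metric.sphere (0 : EuclideanSpace ℝ (Fin 5)) 1 :=
  Quot.lift sphereMap fun _ _ h => by simp only [sphereMap, projInvariant_eq_of_realOrbitRel h]

lemma continuous_orbitSphereMap : Continuous orbitSphereMap := by
  have h : Continuous fun p : realPluckerQuadric => projInvariant p.1 :=
    continuous_projInvariant.comp continuous_subtype_val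
  exact continuous_quot_lift _ <|
    ((h.norm.inv₀ fun p => norm_ne_zero_iff.2 (projInvariant_ne_zero p)).smul h).subtype_mk _

lemma orbitSphereMap_injective : Function.Injective orbitSphereMap := by
  rintro ⟨p⟩ ⟨q⟩ h
  obtain ⟨w, hw1, hw, hwp⟩ := exists_unit_rep p
  obtain ⟨w', hw1', hw', hwq⟩ := exists_unit_rep q
  have hray : SameRay ℝ (projInvariant p.1) (projInvariant q.1) :=
    (sameRay_iff_inv_norm_smul_eq_of_ne (projInvariant_ne_zero p) (projInvariant_ne_zero q)).2
      (congrArg Subtype.val h)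
  obtain ⟨r, hr, hrw⟩ := hray.exists_pos_left (projInvariant_ne_zero p) (projInvariant_ne_zero q)
  rw [← hwp, ← hwq, projInvariant_mk hw1, projInvariant_mk hw1', ← WithLp.toLp_smul] at hrw
  have hrw := WithLp.toLp_injective 2 hrw
  have hr1 : r = 1 := eq_one_of_invariantRadius_smul_eq (orbitInvariant_ne_zero hw w.2) hr.le <| by
    rw [hrw, invariantRadius_orbitInvariant hw, invariantRadius_orbitInvariant hw', hw1, hw1']
  rw [hr1, one_smul] at hrw
  exact Quot.sound (realOrbitRel_of_orbitInvariant_eq hwp hwq hw hw' hrw.symm)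

lemma orbitSphereMap_surjective : Function.Surjective orbitSphereMap := by
  rintro ⟨α, hα⟩
  rw [mem_sphere_zero_iff_norm] at hα
  have hα0 : WithLp.ofLp α ≠ 0 := fun h => by
    rw [WithLp.ofLp_injective 2 (h.trans (WithLp.ofLp_zero 2).symm), norm_zero] at hα
    exact zero_ne_one hα
  obtain ⟨t, ht, hrad⟩ := exists_invariantRadius_smul_eq_one hα0
  obtain ⟨w, hw, hwα⟩ := exists_isPlucker_orbitInvariant_eq (t • WithLp.ofLp α)
  have hw1 : sumSq w = 1 := by rw [← invariantRadius_orbitInvariant hw, hwα, hrad]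
  have hw0 := ne_zero_of_sumSq_eq_one hw1
  refine ⟨Quot.mk _ ⟨Quot.mk _ ⟨w, hw0⟩, ⟨w, hw0⟩, rfl, hw⟩, Subtype.ext ?_⟩
  change ‖projInvariant _‖⁻¹ • projInvariant _ = α
  rw [projInvariant_mk (w := ⟨w, hw0⟩) hw1]
  simp [hwα, norm_smul, hα, abs_of_pos ht, ht.ne']

lemma isCompact_realPluckerQuadric : IsCompact realPluckerQuadric := by
  set K := {w : Fin 6 → ℝ | sumSq w = 1 ∧ IsPlucker w}
  have hK0 : ∀ w ∈ K, w ≠ 0 := fun w hw => ne_zero_of_sumSq_eq_one hw.1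
  have hK : IsCompact K := by
    refine (isCompact_Icc (a := (-1 : Fin 6 → ℝ)) (b := 1)).of_isClosed_subset
      ((isClosed_eq continuous_sumSq continuous_const).inter
        (isClosed_eq (by fun_prop) (by fun_prop))) fun w hw => ?_
    have hk : ∀ k, -1 ≤ w k ∧ w k ≤ 1 := fun k => by
      have : w k ^ 2 ≤ 1 := hw.1 ▸ Finset.single_le_sum (f := fun k => w k ^ 2)
        (fun k _ => sq_nonneg (w k)) (Finset.mem_univ k)
      exact abs_le.1 ((sq_le_one_iff_abs_le_one _).1 this)
    exact ⟨fun k => (hk k).1, fun k => (hk k).2⟩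
  have hrange : realPluckerQuadric =
      Set.range fun w : K => Quot.mk projRelR ⟨w.1, hK0 w.1 w.2⟩ := by
    ext p
    constructor
    · intro hp
      obtain ⟨w, hw1, hw, hwp⟩ := exists_unit_rep ⟨p, hp⟩
      exact ⟨⟨w.1, hw1, hw⟩, hwp⟩
    · rintro ⟨w, rfl⟩
      exact ⟨_, rfl, w.2.2⟩
  have := isCompact_iff_compactSpace.1 hK
  rw [hrange]
  exact isCompact_range (continuous_quot_mk.comp (continuous_subtype_val.subtype_mk _))

end

/-- the orbit space `G₄,₂(ℝ)/ℤ₂⁴` is homeomorphic to the sphere `S⁴`,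
the unit sphere of `ℝ⁵`. -/
theorem realOrbitSpace_homeomorph_sphere :
    Nonempty (Quot realOrbitRel ≃ₜ Metric.sphere (0 : EuclideanSpace ℝ (Fin 5)) 1) := by
  have : CompactSpace realPluckerQuadric :=
    isCompact_iff_compactSpace.1 isCompact_realPluckerQuadric
  exact ⟨continuous_orbitSphereMap.homeoOfEquivCompactToT2
    (f := Equiv.ofBijective _ ⟨orbitSphereMap_injective, orbitSphereMap_surjective⟩)⟩
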